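/- Let G be a finitely generated group and H ≤ G a subgroup with 2 ≤ ẽ(G,H) ≤ ω (the number of coends is at least 2 and every deep-component count is finite). Then for every integer p with 2 ≤ p ≤ ẽ(G,H), the subgroup H contains a finite-index subgroup H₀ with e(G,H₀) ≥ p; in particular H is virtually a codimension-one subgroup of G. -/

import Mathlib

open SimpleGraph

variable {G : Type*} [Group G]

/-- The Cayley graph of `G` with respect to a (symmetric) generating set `S`. -/
def Cay (S : Finset G) : SimpleGraph G :=
  SimpleGraph.fromRel (fun x y => x⁻¹ * y ∈ S)

/-- The subgraph of a graph induced on `Y` (kept on the same vertex set). -/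
def RestrictTo {V : Type*} (X : SimpleGraph V) (Y : Set V) : SimpleGraph V where
  Adj a b := X.Adj a b ∧ a ∈ Y ∧ b ∈ Y
  symm := by constructor; intro a b h; exact ⟨h.1.symm, h.2.2, h.2.1⟩
  loopless := by constructor; intro a h; exact X.irrefl h.1

/-- The closed `L`-neighbourhood of a subset `A ⊆ G` in the Cayley graph. -/
def nbhd (S : Finset G) (A : Set G) (L : ℕ) : Set G :=
  {x : G | ∃ a ∈ A, (Cay S).dist x a ≤ L}

/-- A deep component of `G ∖ K^{+L}`: a connected component of the complement of
the `L`-neighbourhood of `K` containing points arbitrarily far from `K`. -/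
def IsDeepComp (S : Finset G) (K : Subgroup G) (L : ℕ) (C : Set G) : Prop :=
  (∃ x : G, x ∉ nbhd S (K : Set G) L ∧
    C = {y : G | (RestrictTo (Cay S) (nbhd S (K : Set G) L)ᶜ).Reachable x y}) ∧
  ∀ R : ℕ, ∃ c ∈ C, ∀ h ∈ K, R < (Cay S).dist c h

/-- `e(G,K) ≥ p`: for some `L`, the complement `G ∖ K^{+L}` has at least `p`
deep components lying in pairwise distinct `K`-orbits. -/
def RelEndsGe (S : Finset G) (K : Subgroup G) (p : ℕ) : Prop :=
  ∃ L : ℕ, ∃ f : Fin p → Set G, (∀ i, IsDeepComp S K L (f i)) ∧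
    ∀ i j : Fin p, i ≠ j → ∀ k ∈ K, (fun x => k * x) '' f i ≠ f j


/-!
`H` permutes the finitely many deep components of `G ∖ H^{+L}`, so the subgroup `H₀` of `H` fixing
each of them has finite index in `H`. Then `H ⊆ H₀^{+M}` for some `M`, and every deep component `C`
of `G ∖ H^{+L}` contains a deep component of `G ∖ H₀^{+(L+M)}`: points of `C` far from `H` are
joined, off `H₀^{+(L+M)}`, to points next to it, and these lie in finitely many `H₀`-translates of
one ball; by pigeonhole the components of infinitely many of the far points are `H₀`-translates of
one another, so that component is deep. As `H₀` fixes every `C`, deep components chosen in distinct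
`C`'s lie in distinct `H₀`-orbits.
-/

open Pointwise MulAction

namespace SimpleGraph

variable {V W : Type*}

lemma restrictTo_mono (X : SimpleGraph V) {Y Y' : Set V} (h : Y ⊆ Y') :
    RestrictTo X Y ≤ RestrictTo X Y' :=
  fun _ _ hab => ⟨hab.1, h hab.2.1, h hab.2.2⟩

lemma Walk.exists_reachable_restrictTo_compl_adj_mem {X : SimpleGraph V} {A : Set V} {x b : V}
    (w : X.Walk x b) (hx : x ∉ A) (hb : b ∈ A) :
    ∃ z y, (RestrictTo X Aᶜ).Reachable x z ∧ y ∈ A ∧ X.Adj z y := by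
  induction w with
  | nil => exact absurd hb hx
  | @cons u c b h w ih =>
    by_cases hc : c ∈ A
    · exact ⟨u, c, Reachable.refl _, hc, h⟩
    · obtain ⟨z, y, hcz, hy, hzy⟩ := ih hc hb
      exact ⟨z, y, (Adj.reachable (show (RestrictTo X Aᶜ).Adj u c from ⟨h, hx, hc⟩)).trans hcz,
        hy, hzy⟩

lemma Iso.image_setOf_reachable {X : SimpleGraph V} {Y : SimpleGraph W} (f : X ≃g Y) (x : V) :
    f '' {y | X.Reachable x y} = {y | Y.Reachable (f x) y} := by
  ext y
  constructor
  · rintro ⟨z, hz, rfl⟩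
    exact hz.map f.toHom
  · intro hy
    exact ⟨f.symm y, by simpa using hy.map f.symm.toHom, by simp⟩

end SimpleGraph

namespace Cay

variable {S : Finset G}

lemma adj_iff {x y : G} : (Cay S).Adj x y ↔ x ≠ y ∧ (x⁻¹ * y ∈ S ∨ y⁻¹ * x ∈ S) :=
  fromRel_adj _ x y

@[simps!]
def mulLeft (g : G) : Cay S ≃g Cay S where
  toEquiv := Equiv.mulLeft g
  map_rel_iff' := by
    intro x y
    simp only [Equiv.coe_mulLeft, adj_iff, mul_inv_rev, mul_assoc, inv_mul_cancel_left, ne_eq,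
      mul_right_inj]

lemma reachable_one (hgen : Subgroup.closure (S : Set G) = ⊤) (g : G) : (Cay S).Reachable 1 g := by
  have hg : g ∈ Subgroup.closure (S : Set G) := hgen ▸ Subgroup.mem_top g
  induction hg using Subgroup.closure_induction with
  | mem s hs =>
    by_cases h1 : s = 1
    · exact h1 ▸ Reachable.refl _
    · exact Adj.reachable (adj_iff.mpr ⟨Ne.symm h1, Or.inl (by simpa using hs)⟩)
  | one => rfl
  | mul x y _ _ hx hy => exact hx.trans (by simpa using hy.map (mulLeft x).toHom)
  | inv x _ hx => exact (by simpa using hx.map (mulLeft x⁻¹).toHom : (Cay S).Reachable x⁻¹ 1).symm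

lemma connected (hgen : Subgroup.closure (S : Set G) = ⊤) : (Cay S).Connected :=
  (connected_iff_exists_forall_reachable _).mpr ⟨1, reachable_one hgen⟩

lemma dist_mul_left (hc : (Cay S).Connected) (g x y : G) :
    (Cay S).dist (g * x) (g * y) = (Cay S).dist x y := by
  have hle : ∀ g x y : G, (Cay S).dist (g * x) (g * y) ≤ (Cay S).dist x y := fun g x y => by
    obtain ⟨w, hw⟩ := hc.exists_walk_length_eq_dist x y
    exact hw ▸ (dist_le (w.map (mulLeft g).toHom)).trans_eq (Walk.length_map _ _)
  refine (hle g x y).antisymm ?_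
  simpa using hle g⁻¹ (g * x) (g * y)

lemma inv_mul_mem_pow_of_walk {x y : G} (w : (Cay S).Walk x y) :
    x⁻¹ * y ∈ ((S : Set G) ∪ (S : Set G)⁻¹) ^ w.length := by
  induction w with
  | nil => simp
  | @cons x z y h w ih =>
    rw [Walk.length_cons, pow_succ']
    have hxz : x⁻¹ * z ∈ (S : Set G) ∪ (S : Set G)⁻¹ := by
      rcases (adj_iff.mp h).2 with h | h
      · exact Or.inl h
      · exact Or.inr (by simpa using h)
    simpa [mul_assoc] using Set.mul_mem_mul hxz ih

lemma finite_setOf_dist_one_le (hc : (Cay S).Connected) (r : ℕ) :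
    {g : G | (Cay S).dist 1 g ≤ r}.Finite := by
  have hT : ((S : Set G) ∪ (S : Set G)⁻¹).Finite := S.finite_toSet.union S.finite_toSet.inv
  have hpow (n : ℕ) : (((S : Set G) ∪ (S : Set G)⁻¹) ^ n).Finite := by
    induction n with
    | zero => exact Set.finite_one
    | succ n ih => exact pow_succ (M := Set G) _ n ▸ ih.mul hT
  refine ((Set.finite_le_nat r).biUnion fun n _ => hpow n).subset fun g hg => ?_
  obtain ⟨w, hw⟩ := hc.exists_walk_length_eq_dist 1 g
  exact Set.mem_biUnion (hw ▸ hg : w.length ≤ r) (by simpa using inv_mul_mem_pow_of_walk w)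

end Cay

theorem Subgroup.relIndex_inf_iInf_stabilizer_ne_zero {α : Type*} [MulAction G α]
    {K : Subgroup G} {P : Set α} (hP : P.Finite) (hKP : ∀ k ∈ K, ∀ x ∈ P, k • x ∈ P) :
    (K ⊓ ⨅ x : P, stabilizer G (x : α)).relIndex K ≠ 0 := by
  have : Finite P := hP.to_subtype
  refine relIndex_inf_ne_zero (by rw [relIndex_self]; exact one_ne_zero)
    (relIndex_iInf_ne_zero fun x => ?_)
  have hstab : (stabilizer G (x : α)).subgroupOf K = stabilizer K (x : α) := rfl
  rw [relIndex, hstab, index_stabilizer]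
  refine Set.ncard_ne_zero_of_mem (mem_orbit_self _) (hP.subset ?_)
  rintro _ ⟨k, rfl⟩
  exact hKP k k.2 x x.2

variable {S : Finset G}

lemma exists_dist_le_of_relIndex_ne_zero (hc : (Cay S).Connected) {K K' : Subgroup G}
    (h : K'.relIndex K ≠ 0) : ∃ M, ∀ g ∈ K, ∃ a ∈ K', (Cay S).dist g a ≤ M := by
  have : (K'.subgroupOf K).FiniteIndex := ⟨h⟩
  obtain ⟨M, hM⟩ := (Set.finite_range fun q : K ⧸ K'.subgroupOf K =>
    (Cay S).dist ((q.out : G))⁻¹ 1).bddAbove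
  refine ⟨M, fun g hg => ?_⟩
  obtain ⟨k, hk⟩ := QuotientGroup.mk_out_eq_mul (K'.subgroupOf K) (⟨g, hg⟩ : K)⁻¹
  set o := (QuotientGroup.mk (⟨g, hg⟩ : K)⁻¹ : K ⧸ K'.subgroupOf K).out
  have hgo : g = k * (o : G)⁻¹ := by
    rw [hk]
    simp
  refine ⟨k, k.2, ?_⟩
  calc (Cay S).dist g k = (Cay S).dist (o : G)⁻¹ 1 := by
        rw [hgo, ← Cay.dist_mul_left hc (k : G) _ 1, mul_one]
    _ ≤ M := hM ⟨_, rfl⟩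

lemma nbhd_subset_nbhd_add (hc : (Cay S).Connected) {A B : Set G} {M : ℕ}
    (hAB : ∀ a ∈ A, ∃ b ∈ B, (Cay S).dist a b ≤ M) (L : ℕ) : nbhd S A L ⊆ nbhd S B (L + M) := by
  rintro x ⟨a, ha, hxa⟩
  obtain ⟨b, hb, hab⟩ := hAB a ha
  exact ⟨b, hb, (hc.dist_triangle (v := a)).trans (by omega)⟩

lemma mul_mem_nbhd_iff (hc : (Cay S).Connected) {K : Subgroup G} {k : G} (hk : k ∈ K) {L : ℕ}
    {x : G} : k * x ∈ nbhd S K L ↔ x ∈ nbhd S K L := by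
  have key : ∀ k ∈ K, ∀ x ∈ nbhd S K L, k * x ∈ nbhd S K L := by
    rintro k hk x ⟨a, ha, hxa⟩
    exact ⟨k * a, K.mul_mem hk ha, by rwa [Cay.dist_mul_left hc]⟩
  exact ⟨fun h => by simpa using key k⁻¹ (K.inv_mem hk) _ h, key k hk x⟩

def nbhdComplMulLeft (hc : (Cay S).Connected) {K : Subgroup G} {k : G} (hk : k ∈ K) (L : ℕ) :
    RestrictTo (Cay S) (nbhd S K L)ᶜ ≃g RestrictTo (Cay S) (nbhd S K L)ᶜ where
  toEquiv := Equiv.mulLeft k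
  map_rel_iff' {x y} := by
    change (Cay S).Adj (Cay.mulLeft (S := S) k x) (Cay.mulLeft (S := S) k y) ∧ _ ↔ _
    rw [Iso.map_adj_iff]
    simp only [Equiv.coe_mulLeft, Set.mem_compl_iff, mul_mem_nbhd_iff hc hk]
    rfl

lemma IsDeepComp.smul (hc : (Cay S).Connected) {K : Subgroup G} {k : G} (hk : k ∈ K) {L : ℕ}
    {C : Set G} (hC : IsDeepComp S K L C) : IsDeepComp S K L (k • C) := by
  obtain ⟨⟨x, hx, rfl⟩, hfar⟩ := hC
  refine ⟨⟨k * x, (mul_mem_nbhd_iff hc hk).not.mpr hx,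
    (nbhdComplMulLeft hc hk L).image_setOf_reachable x⟩, fun R => ?_⟩
  obtain ⟨c, hcC, hcfar⟩ := hfar R
  refine ⟨k * c, Set.smul_mem_smul_set hcC, fun h hh => ?_⟩
  have := hcfar (k⁻¹ * h) (K.mul_mem (K.inv_mem hk) hh)
  rwa [← Cay.dist_mul_left hc k, mul_inv_cancel_left] at this

lemma IsDeepComp.eq_of_mem {K : Subgroup G} {L : ℕ} {C C' : Set G} (hC : IsDeepComp S K L C)
    (hC' : IsDeepComp S K L C') {x : G} (hx : x ∈ C) (hx' : x ∈ C') : C = C' := by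
  obtain ⟨⟨y, -, rfl⟩, -⟩ := hC
  obtain ⟨⟨y', -, rfl⟩, -⟩ := hC'
  ext z
  exact ⟨fun hz => hx'.trans (hx.symm.trans hz), fun hz => hx.trans (hx'.symm.trans hz)⟩

lemma exists_reachable_inv_mul_dist_le (hc : (Cay S).Connected) {K : Subgroup G} {ℓ : ℕ}
    {c : G} (hcK : c ∉ nbhd S K ℓ) : ∃ z, ∃ a ∈ K,
      (RestrictTo (Cay S) (nbhd S K ℓ)ᶜ).Reachable c z ∧ (Cay S).dist 1 (a⁻¹ * z) ≤ ℓ + 1 := by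
  obtain ⟨z, y, hcz, ⟨a, ha, hya⟩, hzy⟩ :=
    (hc.preconnected c 1).some.exists_reachable_restrictTo_compl_adj_mem hcK
      ⟨1, K.one_mem, by simp⟩
  refine ⟨z, a, ha, hcz, ?_⟩
  rw [← Cay.dist_mul_left hc a, mul_one, mul_inv_cancel_left, dist_comm]
  calc (Cay S).dist z a ≤ (Cay S).dist z y + (Cay S).dist y a := hc.dist_triangle
    _ ≤ ℓ + 1 := by rw [dist_eq_one_iff_adj.mpr hzy]; omega

lemma exists_isDeepComp_of_far (hc : (Cay S).Connected) {K : Subgroup G} {ℓ : ℕ} (c : ℕ → G)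
    (hfar : ∀ n, ∀ h ∈ K, ℓ + n < (Cay S).dist (c n) h) :
    ∃ n, IsDeepComp S K ℓ {y | (RestrictTo (Cay S) (nbhd S K ℓ)ᶜ).Reachable (c n) y} := by
  have hout (n : ℕ) : c n ∉ nbhd S K ℓ := fun ⟨h, hh, hd⟩ => by
    have := hfar n h hh
    omega
  choose z a ha hcz hza using fun n => exists_reachable_inv_mul_dist_le hc (hout n)
  have : Finite {g : G | (Cay S).dist 1 g ≤ ℓ + 1} :=
    (Cay.finite_setOf_dist_one_le hc _).to_subtype
  obtain ⟨b, hb⟩ := Finite.exists_infinite_fiber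
    fun n => (⟨(a n)⁻¹ * z n, hza n⟩ : {g : G | (Cay S).dist 1 g ≤ ℓ + 1})
  have hN := Set.infinite_coe_iff.mp hb
  obtain ⟨n₀, hn₀⟩ := hN.nonempty
  refine ⟨n₀, ⟨c n₀, hout n₀, rfl⟩, fun R => ?_⟩
  obtain ⟨m, hm, hRm⟩ := hN.exists_gt R
  have hk : a n₀ * (a m)⁻¹ ∈ K := K.mul_mem (ha n₀) (K.inv_mem (ha m))
  have hzm : a n₀ * (a m)⁻¹ * z m = z n₀ := by
    have hmn₀ : (a m)⁻¹ * z m = (a n₀)⁻¹ * z n₀ := congrArg Subtype.val (hm.trans hn₀.symm)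
    rw [mul_assoc, hmn₀, mul_inv_cancel_left]
  -- `a n₀ * (a m)⁻¹ ∈ K` carries the component of `c m` onto that of `c n₀`
  refine ⟨a n₀ * (a m)⁻¹ * c m, ?_, fun h hh => ?_⟩
  · have := (hcz m).symm.map (nbhdComplMulLeft hc hk ℓ).toHom
    exact (hcz n₀).trans (hzm ▸ this)
  · have := hfar m ((a n₀ * (a m)⁻¹)⁻¹ * h) (K.mul_mem (K.inv_mem hk) hh)
    rw [← Cay.dist_mul_left hc (a n₀ * (a m)⁻¹), mul_inv_cancel_left] at this
    omega

lemma IsDeepComp.exists_isDeepComp_subset (hc : (Cay S).Connected) {K K' : Subgroup G}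
    (hle : K' ≤ K) {L ℓ : ℕ} (hnb : nbhd S K L ⊆ nbhd S K' ℓ) {C : Set G}
    (hC : IsDeepComp S K L C) : ∃ D, IsDeepComp S K' ℓ D ∧ D ⊆ C := by
  obtain ⟨⟨x, -, rfl⟩, hfar⟩ := hC
  choose c hcC hcfar using fun n => hfar (ℓ + n)
  obtain ⟨n, hn⟩ := exists_isDeepComp_of_far hc c fun n h hh => hcfar n h (hle hh)
  exact ⟨_, hn, fun y hy =>
    (hcC n).trans (hy.mono (restrictTo_mono _ (Set.compl_subset_compl.mpr hnb)))⟩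

theorem stmt19_general (S : Finset G)
    (hgen : Subgroup.closure (S : Set G) = ⊤)
    (H : Subgroup G) (p : ℕ)
    (hdeep : ∃ L : ℕ, ∃ f : Fin p → Set G,
      Function.Injective f ∧ ∀ i, IsDeepComp S H L (f i))
    (hfin : ∀ L : ℕ, {C : Set G | IsDeepComp S H L C}.Finite) :
    ∃ H₀ : Subgroup G, H₀ ≤ H ∧ H₀.relIndex H ≠ 0 ∧ RelEndsGe S H₀ p := by
  obtain ⟨L, f, hinj, hf⟩ := hdeep
  have hc := Cay.connected hgen
  set H₀ := H ⊓ ⨅ C : {C : Set G | IsDeepComp S H L C}, stabilizer G (C : Set G)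
  have hH₀ : H₀.relIndex H ≠ 0 := Subgroup.relIndex_inf_iInf_stabilizer_ne_zero (hfin L)
    fun k hk _ hC => hC.smul hc hk
  obtain ⟨M, hM⟩ := exists_dist_le_of_relIndex_ne_zero hc hH₀
  have hnb := nbhd_subset_nbhd_add hc hM L
  choose D hD hDf using fun i => (hf i).exists_isDeepComp_subset hc inf_le_left hnb
  refine ⟨H₀, inf_le_left, hH₀, L + M, D, hD, fun i j hij k hk hkD => hij (hinj ?_)⟩
  obtain ⟨d, hd, -⟩ := (hD i).2 0
  have hfix : k • f i = f i := Subgroup.mem_iInf.mp (Subgroup.mem_inf.mp hk).2 ⟨f i, hf i⟩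
  refine (hf i).eq_of_mem (hf j) (x := k * d) ?_ (hDf j (hkD ▸ ⟨d, hd, rfl⟩))
  exact hfix ▸ Set.smul_mem_smul_set (hDf i hd)

/-- If `2 ≤ ẽ(G,H) ≤ ω` then, for every `2 ≤ p ≤ ẽ(G,H)`, the subgroup `H`
contains a finite-index subgroup `H₀` with `e(G,H₀) ≥ p`; in particular `H` is
virtually codimension-one in `G`. -/
theorem stmt19 (S : Finset G) (hsym : ∀ s ∈ S, s⁻¹ ∈ S)
    (hgen : Subgroup.closure (S : Set G) = ⊤)
    (H : Subgroup G) (p : ℕ) (hp : 2 ≤ p)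
    (hdeep : ∃ L : ℕ, ∃ f : Fin p → Set G,
      Function.Injective f ∧ ∀ i, IsDeepComp S H L (f i))
    (hfin : ∀ L : ℕ, {C : Set G | IsDeepComp S H L C}.Finite) :
    ∃ H₀ : Subgroup G, H₀ ≤ H ∧ H₀.relIndex H ≠ 0 ∧ RelEndsGe S H₀ p :=
  stmt19_general S hgen H p hdeep hfin
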